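/- Let g be a monotone hierarchy with root i_0, and for a node i at depth ρ(i) and d ≤ ρ(i), the number of nodes at distance at most d from i equals Q(i,d) = p(i_{ρ(i)−d}, 0) + ∑_{r=1}^{d−1} [p(i_{ρ(i)−d+r}, r−1) + p(i_{ρ(i)−d+r}, r)] + p(i, d−1) + p(i, d), where i_0, i_1, ..., i_{ρ(i)} = i is the unique path from the root to i and p(k,ℓ) is the number of successors of k at distance ℓ, counting k itself when ℓ = 0. For any i, j with ρ(j) = ρ(i) + 1 and any d ≤ ρ(i), Q(i,d) ≥ Q(j,d). -/

import Mathlib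

/-- `j` is a successor of `i` in the tree `g` oriented away from the root `r`. -/
def Succ {n : ℕ} (g : SimpleGraph (Fin n)) (r i j : Fin n) : Prop :=
  i ≠ j ∧ g.dist r j = g.dist r i + g.dist i j

/-- `succCount g r i ℓ`: number of successors of `i` at distance `ℓ` from `i`
(counting `i` itself when `ℓ = 0`). -/
noncomputable def succCount {n : ℕ} (g : SimpleGraph (Fin n)) (r i : Fin n) (ℓ : ℕ) : ℕ :=
  Nat.card {j : Fin n | g.dist i j = ℓ ∧ g.dist r j = g.dist r i + ℓ}

/-- `Q g i d`: number of nodes at distance at most `d` from `i`. -/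
noncomputable def ballCount {n : ℕ} (g : SimpleGraph (Fin n)) (i : Fin n) (d : ℕ) : ℕ :=
  Nat.card {k : Fin n | g.dist i k ≤ d}

/-- A monotone hierarchy (see the paper's definition). -/
def IsMonotoneHierarchy {n : ℕ} (g : SimpleGraph (Fin n)) [DecidableRel g.Adj]
    (r : Fin n) (h : ℕ) : Prop :=
  g.IsTree ∧
  (∀ i j, g.dist r i < g.dist r j → g.degree j ≤ g.degree i) ∧
  (∀ i j, g.dist r i = g.dist r j → g.degree j < g.degree i →
    ∀ k l, Succ g r i k → Succ g r j l → g.dist r k = g.dist r l →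
      g.degree l ≤ g.degree k) ∧
  (∀ i j, g.dist r i = g.dist r j → g.degree i = g.degree j →
    (∃ k l, Succ g r i k ∧ Succ g r j l ∧ g.dist r k = g.dist r l ∧
      g.degree l < g.degree k) →
    ∀ k l, Succ g r i k → Succ g r j l → g.dist r k = g.dist r l →
      g.degree l ≤ g.degree k) ∧
  (∀ i, g.degree i = 1 → g.dist r i = h)

/-!
Along the geodesic `r = i₀, …, i_D = i` of a tree, the distance to a fixed vertex `k` is
V-shaped, `dist(i_s, k) = dist(i_b, k) + |s - b|` with `i_b` the point where the branch of `k`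
leaves the path: consecutive distances differ by one, and a rise followed by a fall would give
`i_{s+1}` two neighbours closer to `k`. Hence a vertex of depth `D - d + m` lies within
distance `d` of `i` exactly when it descends from `i_s` with `s = D - d + ⌈m/2⌉`, and slicing
the ball by depth gives the formula.

For the comparison, `p(j, ℓ) ≤ p(i, ℓ)` whenever `ρ(j) = ρ(i) + 1`, by induction on `ℓ`:
`p(v, ℓ + 1)` is the sum of `p(c, ℓ)` over the children `c` of `v`, and `j` has at most as many
children as `i` because degrees decrease with depth. The two slice sums are then compared termwise.
-/

open Finset SimpleGraph

lemma Nat.exists_eq_add_dist_of_no_peak {f : ℕ → ℕ} {D : ℕ}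
    (hstep : ∀ s < D, f s = f (s + 1) + 1 ∨ f (s + 1) = f s + 1)
    (hnopeak : ∀ s, s + 2 ≤ D → f (s + 1) = f s + 1 → f (s + 2) = f (s + 1) + 1) :
    ∃ b ≤ D, ∀ s ≤ D, f s = f b + s.dist b := by
  induction D with
  | zero => exact ⟨0, le_rfl, fun s hs => by simp [Nat.le_zero.mp hs]⟩
  | succ D ih =>
    obtain ⟨b, hbD, hb⟩ := ih (fun s hs => hstep s (by omega)) (fun s hs => hnopeak s (by omega))
    simp only [Nat.dist] at hb ⊢
    rcases hstep D (lt_add_one D) with hfall | hup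
    · obtain rfl : b = D := by
        by_contra hne
        obtain ⟨D, rfl⟩ : ∃ D', D = D' + 1 := ⟨D - 1, by omega⟩
        have h1 := hb D (by omega)
        have h2 := hb (D + 1) le_rfl
        have h3 : f (D + 1 + 1) = f (D + 1) + 1 := hnopeak D le_rfl (by omega)
        omega
      refine ⟨b + 1, le_rfl, fun s hs => ?_⟩
      rcases Nat.lt_or_ge s (b + 1) with hs' | hs'
      · have := hb s (by omega); omega
      · obtain rfl : s = b + 1 := by omega
        omega
    · refine ⟨b, by omega, fun s hs => ?_⟩
      rcases Nat.lt_or_ge s (D + 1) with hs' | hs'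
      · exact hb s (by omega)
      · obtain rfl : s = D + 1 := by omega
        have := hb D le_rfl; omega

lemma Finset.sum_range_two_mul_add_one_eq {M : Type*} [AddCommMonoid M] (F : ℕ → ℕ → M) {d : ℕ}
    (hd : 1 ≤ d) :
    ∑ m ∈ range (2 * d + 1), F ((m + 1) / 2) (m / 2) =
      F 0 0 + ∑ t ∈ Ico 1 d, (F t (t - 1) + F t t) + F d (d - 1) + F d d := by
  induction d, hd using Nat.le_induction with
  | base => simp [sum_range_succ]
  | succ d hd ih =>
    rw [show 2 * (d + 1) + 1 = 2 * d + 1 + 1 + 1 by ring, sum_range_succ, sum_range_succ, ih,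
      sum_Ico_succ_top hd]
    simp only [show (2 * d + 1 + 1) / 2 = d + 1 by omega, show (2 * d + 1) / 2 = d by omega,
      show (2 * d + 1 + 1 + 1) / 2 = d + 1 by omega, add_tsub_cancel_right]
    abel

lemma Finset.sum_le_sum_of_card_le_of_forall_le {ι κ M : Type*} [AddCommMonoid M] [LinearOrder M]
    [IsOrderedAddMonoid M] [CanonicallyOrderedAdd M] {s : Finset ι} {t : Finset κ}
    {f : ι → M} {g : κ → M} (hcard : #t ≤ #s) (hle : ∀ i ∈ s, ∀ j ∈ t, g j ≤ f i) :
    ∑ j ∈ t, g j ≤ ∑ i ∈ s, f i := by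
  rcases t.eq_empty_or_nonempty with rfl | ht
  · simp
  obtain ⟨i₀, hi₀, hmin⟩ := s.exists_min_image f (card_pos.1 (ht.card_pos.trans_le hcard))
  calc ∑ j ∈ t, g j ≤ #t • f i₀ := sum_le_card_nsmul _ _ _ fun j hj => hle i₀ hi₀ j hj
    _ ≤ #s • f i₀ := nsmul_le_nsmul_left zero_le hcard
    _ ≤ ∑ i ∈ s, f i := card_nsmul_le_sum _ _ _ hmin

namespace SimpleGraph

variable {V : Type*} {G : SimpleGraph V}

lemma Reachable.exists_adj_dist_add_one_eq {u v : V} (h : G.Reachable u v) (hne : u ≠ v) :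
    ∃ c, G.Adj u c ∧ G.dist c v + 1 = G.dist u v := by
  obtain ⟨p, hp⟩ := h.exists_walk_length_eq_dist
  cases p with
  | nil => exact absurd rfl hne
  | cons hadj q =>
    refine ⟨_, hadj, ?_⟩
    have hq := dist_le q
    have htri := hadj.reachable.dist_triangle_left v
    rw [Walk.length_cons] at hp
    rw [dist_eq_one_iff_adj.mpr hadj] at htri
    omega

lemma Reachable.exists_seq_adj_succ {u v : V} (h : G.Reachable u v) :
    ∃ p : ℕ → V, p 0 = u ∧ p (G.dist u v) = v ∧ ∀ t < G.dist u v, G.Adj (p t) (p (t + 1)) := by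
  obtain ⟨w, hw⟩ := h.exists_walk_length_eq_dist
  exact ⟨w.getVert, w.getVert_zero, hw ▸ w.getVert_length,
    fun t ht => w.adj_getVert_succ (hw ▸ ht)⟩

lemma IsAcyclic.eq_of_adj_of_dist_eq_add_one (hG : G.IsAcyclic) {u c c' k : V}
    (hc : G.Adj c u) (hc' : G.Adj c' u) (h : G.dist k u = G.dist k c + 1)
    (h' : G.dist k u = G.dist k c' + 1) : c = c' := by
  have hku : G.Reachable k u := Reachable.of_dist_ne_zero (by omega)
  obtain ⟨p, -, hp⟩ := (hku.trans hc.symm.reachable).exists_path_of_dist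
  obtain ⟨p', -, hp'⟩ := (hku.trans hc'.symm.reachable).exists_path_of_dist
  have hq := (p.concat hc).isPath_of_length_eq_dist (by rw [Walk.length_concat, hp, h])
  have hq' := (p'.concat hc').isPath_of_length_eq_dist (by rw [Walk.length_concat, hp', h'])
  exact (Walk.concat_inj
    (congrArg Subtype.val ((hG.subsingleton_path k u).elim ⟨_, hq⟩ ⟨_, hq'⟩))).1

section Sequence

variable {path : ℕ → V} {D : ℕ} (hadj : ∀ t < D, G.Adj (path t) (path (t + 1)))
include hadj

lemma reachable_of_adj_succ {s t : ℕ} (hst : s ≤ t) (htD : t ≤ D) :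
    G.Reachable (path s) (path t) := by
  induction t, hst using Nat.le_induction with
  | base => rfl
  | succ t _ ih => exact (ih (by omega)).trans (hadj t (by omega)).reachable

lemma dist_le_sub_of_adj_succ {s t : ℕ} (hst : s ≤ t) (htD : t ≤ D) :
    G.dist (path s) (path t) ≤ t - s := by
  induction t, hst using Nat.le_induction with
  | base => simp
  | succ t hst ih =>
    have htri := (hadj t (by omega)).reachable.dist_triangle_right (path s)
    rw [dist_eq_one_iff_adj.mpr (hadj t (by omega))] at htri
    have := ih (by omega)
    omega

lemma dist_eq_sub_of_adj_succ (hgeod : G.dist (path 0) (path D) = D) {s t : ℕ} (hst : s ≤ t)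
    (htD : t ≤ D) : G.dist (path s) (path t) = t - s := by
  have h0s := dist_le_sub_of_adj_succ hadj (Nat.zero_le s) (hst.trans htD)
  have hst' := dist_le_sub_of_adj_succ hadj hst htD
  have htD' := dist_le_sub_of_adj_succ hadj htD le_rfl
  have h1 := (reachable_of_adj_succ hadj (Nat.zero_le s) (hst.trans htD)).dist_triangle_left
    (path D)
  have h2 := (reachable_of_adj_succ hadj hst htD).dist_triangle_left (path D)
  omega

lemma dist_eq_of_adj_succ {r : V} (h0 : path 0 = r) (hgeod : G.dist r (path D) = D) {s : ℕ}
    (hsD : s ≤ D) : G.dist r (path s) = s := by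
  subst h0
  simpa using dist_eq_sub_of_adj_succ hadj hgeod (Nat.zero_le s) hsD

lemma IsTree.exists_dist_eq_add_dist_of_adj_succ (hG : G.IsTree)
    (hgeod : G.dist (path 0) (path D) = D) (k : V) :
    ∃ b ≤ D, ∀ s ≤ D, G.dist (path s) k = G.dist (path b) k + s.dist b := by
  simp only [G.dist_comm (v := k)]
  refine Nat.exists_eq_add_dist_of_no_peak
    (fun s hs => hG.dist_eq_dist_add_one_of_adj k (hadj s hs)) fun s hs hup => ?_
  refine (hG.dist_eq_dist_add_one_of_adj k (hadj (s + 1) (by omega))).resolve_left fun hfall => ?_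
  have hpeak := hG.isAcyclic.eq_of_adj_of_dist_eq_add_one (hadj s (by omega))
    (hadj (s + 1) (by omega)).symm hup hfall
  have h2 := dist_eq_sub_of_adj_succ hadj hgeod (s := s) (t := s + 2) (by omega) hs
  rw [hpeak, dist_self] at h2
  omega

lemma IsTree.dist_le_and_eq_iff_of_adj_succ (hG : G.IsTree)
    (hgeod : G.dist (path 0) (path D) = D) {d m : ℕ} (hd : d ≤ D) (hm : m ≤ 2 * d) (k : V) :
    (G.dist (path D) k ≤ d ∧ G.dist (path 0) k + d - D = m) ↔
      (G.dist (path (D - d + (m + 1) / 2)) k = m / 2 ∧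
        G.dist (path 0) k = D - d + (m + 1) / 2 + m / 2) := by
  obtain ⟨b, -, hb⟩ := hG.exists_dist_eq_add_dist_of_adj_succ hadj hgeod k
  have h0 := hb 0 (Nat.zero_le _)
  have hD := hb D le_rfl
  have hs := hb (D - d + (m + 1) / 2) (by omega)
  simp only [Nat.dist] at h0 hD hs
  omega

end Sequence

section Counting

variable {n : ℕ} {g : SimpleGraph (Fin n)} {r : Fin n}

lemma ballCount_eq_card (i : Fin n) (d : ℕ) :
    ballCount g i d = #{k | g.dist i k ≤ d} := by
  simp [ballCount, Nat.card_eq_fintype_card, Fintype.card_subtype]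

lemma succCount_eq_card (v : Fin n) (ℓ : ℕ) :
    succCount g r v ℓ = #{k | g.dist v k = ℓ ∧ g.dist r k = g.dist r v + ℓ} := by
  simp [succCount, Nat.card_eq_fintype_card, Fintype.card_subtype]

lemma Connected.succCount_zero (hG : g.Connected) (v : Fin n) : succCount g r v 0 = 1 := by
  rw [succCount_eq_card, card_eq_one]
  exact ⟨v, by ext k; simp +contextual [hG.dist_eq_zero_iff, eq_comm]⟩

theorem IsTree.ballCount_eq_sum_succCount (hG : g.IsTree) {path : ℕ → Fin n} {D d : ℕ}
    (hadj : ∀ t < D, g.Adj (path t) (path (t + 1))) (h0 : path 0 = r)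
    (hgeod : g.dist r (path D) = D) (hd : d ≤ D) :
    ballCount g (path D) d =
      ∑ m ∈ range (2 * d + 1), succCount g r (path (D - d + (m + 1) / 2)) (m / 2) := by
  subst h0
  rw [ballCount_eq_card,
    card_eq_sum_card_fiberwise (f := fun k => g.dist (path 0) k + d - D) (t := range (2 * d + 1))]
  · refine sum_congr rfl fun m hm => ?_
    rw [mem_range] at hm
    rw [succCount_eq_card, dist_eq_of_adj_succ hadj rfl hgeod (by omega), filter_filter]
    exact congrArg card (filter_congr fun k _ =>
      hG.dist_le_and_eq_iff_of_adj_succ hadj hgeod hd (by omega) k)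
  · intro k hk
    have htri := hG.connected.dist_triangle (u := path 0) (v := path D) (w := k)
    simp only [coe_filter, coe_range, Set.mem_Iio, mem_univ, true_and, Set.mem_ofPred_eq] at hk ⊢
    omega

noncomputable def children (g : SimpleGraph (Fin n)) [DecidableRel g.Adj] (r v : Fin n) :
    Finset (Fin n) :=
  {c ∈ g.neighborFinset v | g.dist r c = g.dist r v + 1}

variable [DecidableRel g.Adj]

lemma IsTree.dist_eq_add_one_of_mem_children (hG : g.IsTree) {v c k : Fin n} {ℓ : ℕ}
    (hc : c ∈ children g r v) (hck : g.dist c k = ℓ) (hrk : g.dist r k = g.dist r c + ℓ) :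
    g.dist v k = ℓ + 1 := by
  simp only [children, mem_filter, mem_neighborFinset] at hc
  have h1 := hG.connected.dist_triangle (u := v) (v := c) (w := k)
  have h2 := hG.connected.dist_triangle (u := r) (v := v) (w := k)
  rw [dist_eq_one_iff_adj.mpr hc.1] at h1
  omega

lemma IsTree.exists_mem_children_of_dist_eq_add_one (hG : g.IsTree) {v k : Fin n} {ℓ : ℕ}
    (hvk : g.dist v k = ℓ + 1) (hrk : g.dist r k = g.dist r v + (ℓ + 1)) :
    ∃ c ∈ children g r v, g.dist c k = ℓ ∧ g.dist r k = g.dist r c + ℓ := by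
  obtain ⟨c, hadj, hck⟩ := (hG.connected v k).exists_adj_dist_add_one_eq
    (by rintro rfl; simp at hvk)
  have h1 := hG.connected.dist_triangle (u := r) (v := v) (w := c)
  have h2 := hG.connected.dist_triangle (u := r) (v := c) (w := k)
  rw [dist_eq_one_iff_adj.mpr hadj] at h1
  refine ⟨c, ?_, by omega, by omega⟩
  simp only [children, mem_filter, mem_neighborFinset]
  exact ⟨hadj, by omega⟩

lemma IsTree.succCount_succ (hG : g.IsTree) (v : Fin n) (ℓ : ℕ) :
    succCount g r v (ℓ + 1) = ∑ c ∈ children g r v, succCount g r c ℓ := by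
  simp only [succCount_eq_card]
  rw [← card_biUnion]
  · congr 1
    ext k
    simp only [mem_filter, mem_univ, true_and, mem_biUnion]
    exact ⟨fun ⟨hvk, hrk⟩ => hG.exists_mem_children_of_dist_eq_add_one hvk hrk,
      fun ⟨c, hc, hck, hrk⟩ => ⟨hG.dist_eq_add_one_of_mem_children hc hck hrk, by
        simp only [children, mem_filter] at hc; omega⟩⟩
  · intro c hc c' hc' hne
    rw [Function.onFun, Finset.disjoint_left]
    intro k hk hk'
    apply hne
    simp only [mem_filter, mem_univ, true_and] at hk hk'
    have hvk := hG.dist_eq_add_one_of_mem_children hc hk.1 hk.2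
    simp only [children, coe_filter, Set.mem_ofPred_eq, mem_neighborFinset] at hc hc'
    exact hG.isAcyclic.eq_of_adj_of_dist_eq_add_one hc.1.symm hc'.1.symm
      (by rw [dist_comm, hvk, dist_comm, hk.1]) (by rw [dist_comm, hvk, dist_comm, hk'.1])

lemma IsTree.degree_le_card_children_add_one (hG : g.IsTree) (v : Fin n) :
    g.degree v ≤ #(children g r v) + 1 := by
  rw [← card_neighborFinset_eq_degree, children,
    ← card_filter_add_card_filter_not (s := g.neighborFinset v)
      (fun c => g.dist r c = g.dist r v + 1)]
  suffices #{c ∈ g.neighborFinset v | ¬g.dist r c = g.dist r v + 1} ≤ 1 by omega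
  refine card_le_one.2 fun c hc c' hc' => ?_
  simp only [mem_filter, mem_neighborFinset] at hc hc'
  exact hG.isAcyclic.eq_of_adj_of_dist_eq_add_one hc.1.symm hc'.1.symm
    ((hG.dist_eq_dist_add_one_of_adj r hc.1).resolve_right hc.2)
    ((hG.dist_eq_dist_add_one_of_adj r hc'.1).resolve_right hc'.2)

lemma Connected.card_children_add_one_le_degree (hG : g.Connected) {v : Fin n} (hv : v ≠ r) :
    #(children g r v) + 1 ≤ g.degree v := by
  obtain ⟨c, hadj, hc⟩ := (hG v r).exists_adj_dist_add_one_eq hv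
  rw [← card_neighborFinset_eq_degree, children,
    ← card_filter_add_card_filter_not (s := g.neighborFinset v)
      (fun c => g.dist r c = g.dist r v + 1)]
  suffices 0 < #{c ∈ g.neighborFinset v | ¬g.dist r c = g.dist r v + 1} by omega
  refine card_pos.2 ⟨c, ?_⟩
  rw [dist_comm (u := c), dist_comm (u := v)] at hc
  simp only [mem_filter, mem_neighborFinset]
  exact ⟨hadj, by omega⟩

theorem IsTree.succCount_le_of_dist_eq_add_one (hG : g.IsTree)
    (hdeg : ∀ i j, g.dist r j = g.dist r i + 1 → g.degree j ≤ g.degree i) (ℓ : ℕ) {i j : Fin n}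
    (hij : g.dist r j = g.dist r i + 1) : succCount g r j ℓ ≤ succCount g r i ℓ := by
  induction ℓ generalizing i j with
  | zero => rw [hG.connected.succCount_zero, hG.connected.succCount_zero]
  | succ ℓ ih =>
    rw [hG.succCount_succ, hG.succCount_succ]
    refine sum_le_sum_of_card_le_of_forall_le ?_ fun c hc c' hc' => ih ?_
    · have hjr : j ≠ r := by rintro rfl; simp at hij
      have := hG.connected.card_children_add_one_le_degree hjr
      have := hG.degree_le_card_children_add_one (r := r) i
      have := hdeg i j hij
      omega
    · simp only [children, mem_filter] at hc hc'
      omega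

end Counting

end SimpleGraph

/-- The formula for `Q(i,d)` along the root-to-`i` path for `d ≤ ρ(i)`, and the
comparison `Q(i,d) ≥ Q(j,d)` when `ρ(j) = ρ(i) + 1`. -/
theorem stmt_15 {n : ℕ} (g : SimpleGraph (Fin n)) [DecidableRel g.Adj]
    (r : Fin n) (h : ℕ) (hMH : IsMonotoneHierarchy g r h)
    (i : Fin n) (d : ℕ) (hd1 : 1 ≤ d) (hd : d ≤ g.dist r i)
    (path : ℕ → Fin n) (hpath0 : path 0 = r) (hpathi : path (g.dist r i) = i)
    (hpathadj : ∀ t < g.dist r i, g.Adj (path t) (path (t + 1))) :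
    (ballCount g i d =
      succCount g r (path (g.dist r i - d)) 0 +
        (∑ t ∈ Finset.Ico 1 d,
          (succCount g r (path (g.dist r i - d + t)) (t - 1) +
            succCount g r (path (g.dist r i - d + t)) t)) +
        succCount g r i (d - 1) + succCount g r i d) ∧
    (∀ j : Fin n, g.dist r j = g.dist r i + 1 → ballCount g j d ≤ ballCount g i d) := by
  obtain ⟨hG, hdeg, -⟩ := hMH
  have hball := hG.ballCount_eq_sum_succCount hpathadj hpath0 (by rw [hpathi]) hd
  rw [hpathi] at hball
  refine ⟨?_, fun j hj => ?_⟩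
  · rw [hball, sum_range_two_mul_add_one_eq
      (fun a b => succCount g r (path (g.dist r i - d + a)) b) hd1]
    simp only [add_zero, Nat.sub_add_cancel hd, hpathi]
  obtain ⟨q, hq0, hqj, hqadj⟩ := (hG.connected r j).exists_seq_adj_succ
  have hballj := hG.ballCount_eq_sum_succCount hqadj hq0 (by rw [hqj])
    (show d ≤ g.dist r j by omega)
  rw [hqj] at hballj
  rw [hball, hballj]
  refine sum_le_sum fun m hm => hG.succCount_le_of_dist_eq_add_one
    (fun i j hij => hdeg i j (by omega)) _ ?_
  rw [mem_range] at hm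
  rw [dist_eq_of_adj_succ hpathadj hpath0 (by rw [hpathi]) (by omega),
    dist_eq_of_adj_succ hqadj hq0 (by rw [hqj]) (by omega)]
  omega
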